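/- Let E be a real inner product space, w ∈ E with w ≠ 0, α > 0, z ∈ E. If x ∈ E maximizes the utility u(y) = (1 if ⟪y, w⟫ ≥ α·‖w‖ else 0) − ‖y − z‖/α over all y ∈ E, then it is not the case that 0 < ⟪x, w⟫ < α·‖w‖. -/

import Mathlib

/-!
If a best response `x` is labelled negative, its utility is `-‖x - z‖ / α`, while the truthful
report `z` has utility at least `0`; hence `x = z`. But a point `z` strictly between the two
hyperplanes lies at distance less than `α` from the classifier hyperplane, so moving there costs
less than the unit gain of a positive label, and `z` is not a best response.
-/

open RealInnerProductSpace

section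

variable {E : Type*} [NormedAddCommGroup E] [InnerProductSpace ℝ E]

noncomputable def manipulationUtility (w : E) (τ α : ℝ) (z y : E) : ℝ :=
  (if ⟪y, w⟫ ≥ τ * ‖w‖ then (1 : ℝ) else 0) - ‖y - z‖ / α

def IsBestResponse (w : E) (τ α : ℝ) (z x : E) : Prop :=
  ∀ y : E, manipulationUtility w τ α z y ≤ manipulationUtility w τ α z x

variable {w : E} {τ α : ℝ} {z x y : E}

lemma manipulationUtility_self_nonneg : 0 ≤ manipulationUtility w τ α z z := by
  unfold manipulationUtility
  split_ifs <;> simp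

lemma manipulationUtility_of_lt (h : ⟪y, w⟫ < τ * ‖w‖) :
    manipulationUtility w τ α z y = -(‖y - z‖ / α) := by
  rw [manipulationUtility, if_neg h.not_ge, zero_sub]

lemma manipulationUtility_of_ge (h : τ * ‖w‖ ≤ ⟪y, w⟫) :
    manipulationUtility w τ α z y = 1 - ‖y - z‖ / α := by
  rw [manipulationUtility, if_pos h]

lemma IsBestResponse.eq_of_inner_lt (hx : IsBestResponse w τ α z x) (hα : 0 < α)
    (hneg : ⟪x, w⟫ < τ * ‖w‖) : x = z := by
  have hcost : ‖x - z‖ / α ≤ 0 := by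
    have := manipulationUtility_self_nonneg.trans (hx z)
    rwa [manipulationUtility_of_lt hneg, neg_nonneg] at this
  rw [← sub_eq_zero, ← norm_le_zero_iff]
  simpa using (div_le_iff₀ hα).mp hcost

lemma exists_inner_eq_norm_sub_eq (hw : w ≠ 0) (x : E) (c : ℝ) :
    ∃ y : E, ⟪y, w⟫ = c ∧ ‖y - x‖ = |c - ⟪x, w⟫| / ‖w‖ := by
  have hw' : ‖w‖ ≠ 0 := norm_ne_zero_iff.mpr hw
  refine ⟨x + ((c - ⟪x, w⟫) / ‖w‖ ^ 2) • w, ?_, ?_⟩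
  · rw [inner_add_left, real_inner_smul_left, real_inner_self_eq_norm_sq]
    field_simp
    ring
  · rw [add_sub_cancel_left, norm_smul, Real.norm_eq_abs, abs_div, abs_pow, abs_norm]
    field_simp

lemma not_isBestResponse_self (hα : 0 < α) (hw : w ≠ 0) (hneg : ⟪z, w⟫ < τ * ‖w‖)
    (hnear : τ * ‖w‖ - ⟪z, w⟫ < α * ‖w‖) : ¬ IsBestResponse w τ α z z := by
  intro hz
  obtain ⟨y, hy, hyz⟩ := exists_inner_eq_norm_sub_eq hw z (τ * ‖w‖)
  have hcost : ‖y - z‖ < α := by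
    rw [hyz, abs_of_pos (sub_pos.mpr hneg), div_lt_iff₀ (norm_pos_iff.mpr hw)]
    exact hnear
  have hgain : 0 < manipulationUtility w τ α z y := by
    rw [manipulationUtility_of_ge hy.ge, sub_pos, div_lt_one hα]
    exact hcost
  have hzero : manipulationUtility w τ α z z = 0 := by
    simp [manipulationUtility_of_lt hneg]
  exact (hgain.trans_le (hz y)).ne' hzero

end

theorem strategic_best_response_forbidden_region
    {E : Type*} [NormedAddCommGroup E] [InnerProductSpace ℝ E]
    (w : E) (hw : w ≠ 0) (α : ℝ) (hα : 0 < α) (z x : E)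
    (hmax : ∀ y : E,
      ((if ⟪y, w⟫ ≥ α * ‖w‖ then (1 : ℝ) else 0) - ‖y - z‖ / α) ≤
        ((if ⟪x, w⟫ ≥ α * ‖w‖ then (1 : ℝ) else 0) - ‖x - z‖ / α)) :
    ¬ (0 < ⟪x, w⟫ ∧ ⟪x, w⟫ < α * ‖w‖) := by
  rintro ⟨hpos, hneg⟩
  have hbest : IsBestResponse w α α z x := hmax
  obtain rfl := hbest.eq_of_inner_lt hα hneg
  exact not_isBestResponse_self hα hw hneg (by linarith) hbest
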